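/- Let V: ℂ³ → ℂ³⊗ℂ³ be the qutrit tensor with ⟨jk|V|l⟩ = 0 if j=k, k=l, or l=j, and 1/√2 otherwise. Then the completely positive map E(X) = V†(X ⊗ I)V on M₃(ℂ) has exactly the eigenvalues 1, 1/2, and −1/2, with the eigenvalue 1 having eigenvector the identity matrix, eigenvalue 1/2 having a 3-dimensional eigenspace, and eigenvalue −1/2 having a 5-dimensional eigenspace. -/
import Mathlib

open Matrix Kronecker

/-- The qutrit three-leg perfect tensor. -/
noncomputable def perfectV : Matrix (Fin 3 × Fin 3) (Fin 3) ℂ :=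
  fun jk l =>
    if jk.1 = jk.2 ∨ jk.2 = l ∨ l = jk.1 then 0
    else (1 : ℂ) / Real.sqrt 2

/-- The ascending CP map `E(X) = V†(X ⊗ I)V` as a linear endomorphism of `M₃(ℂ)`. -/
noncomputable def ascendE : Module.End ℂ (Matrix (Fin 3) (Fin 3) ℂ) where
  toFun X := perfectVᴴ * (X ⊗ₖ (1 : Matrix (Fin 3) (Fin 3) ℂ)) * perfectV
  map_add' X Y := by
    simp [Matrix.add_kronecker, Matrix.mul_add, Matrix.add_mul]
  map_smul' c X := by
    simp [Matrix.smul_kronecker, Matrix.mul_smul, smul_mul_assoc]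

lemma sqrt2_mul : ((Real.sqrt 2 : ℂ))⁻¹ * ((Real.sqrt 2 : ℂ))⁻¹ = 1/2 := by
  rw [← mul_inv]
  norm_num [← Complex.ofReal_mul, Real.mul_self_sqrt]

set_option maxHeartbeats 2000000 in
lemma ascendE_apply (X : Matrix (Fin 3) (Fin 3) ℂ) :
    ascendE X = (1/2 : ℂ) • (Xᵀ + X.trace • (1 : Matrix (Fin 3) (Fin 3) ℂ))
      - Matrix.diagonal (fun i => X i i) := by
  ext l m
  simp only [ascendE, perfectV, LinearMap.coe_mk, AddHom.coe_mk,
    Matrix.mul_apply, Matrix.conjTranspose_apply, Matrix.kroneckerMap_apply,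
    Fintype.sum_prod_type, Fin.sum_univ_three]
  fin_cases l <;> fin_cases m <;>
    simp +decide only [Matrix.one_apply, Matrix.smul_apply, Matrix.sub_apply, Matrix.add_apply,
      Matrix.diagonal_apply, Matrix.transpose_apply, Matrix.trace_fin_three,
      if_true, if_false, star_zero, zero_mul, mul_zero, add_zero, zero_add,
      one_div, star_inv₀, Complex.star_def, Complex.conj_ofReal, smul_eq_mul] <;>
    ring_nf <;>
    rw [show ((Real.sqrt 2:ℂ))⁻¹ ^ 2 = ((Real.sqrt 2:ℂ))⁻¹ * ((Real.sqrt 2:ℂ))⁻¹ from sq _] <;>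
    rw [sqrt2_mul] <;> simp <;> ring

/-- Entrywise eigenvalue equation. -/
lemma eigen_entries {x : Matrix (Fin 3) (Fin 3) ℂ} {μ : ℂ}
    (h : x ∈ Module.End.eigenspace ascendE μ) (l m : Fin 3) :
    (1/2 : ℂ) * x m l
      + (if l = m then (1/2 : ℂ) * (x 0 0 + x 1 1 + x 2 2) - x l l else 0)
      = μ * x l m := by
  rw [Module.End.mem_eigenspace_iff, ascendE_apply] at h
  have h' := congrFun (congrFun h l) m
  rcases eq_or_ne l m with rfl | hlm
  · simp only [Matrix.sub_apply, Matrix.add_apply, Matrix.smul_apply, Matrix.one_apply_eq,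
      Matrix.diagonal_apply_eq, Matrix.transpose_apply, Matrix.trace_fin_three,
      smul_eq_mul, if_pos rfl, if_true, mul_one] at h' ⊢
    linear_combination h'
  · simp only [Matrix.sub_apply, Matrix.add_apply, Matrix.smul_apply,
      Matrix.one_apply_ne hlm, Matrix.diagonal_apply_ne _ hlm, Matrix.transpose_apply,
      smul_eq_mul, if_neg hlm] at h' ⊢
    linear_combination h'

noncomputable def symMap : (Fin 3 → ℂ) →ₗ[ℂ] Matrix (Fin 3) (Fin 3) ℂ where
  toFun c := !![0, c 0, c 1; c 0, 0, c 2; c 1, c 2, 0]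
  map_add' a b := by ext i j; fin_cases i <;> fin_cases j <;> simp
  map_smul' r a := by ext i j; fin_cases i <;> fin_cases j <;> simp

noncomputable def asymMap : (Fin 5 → ℂ) →ₗ[ℂ] Matrix (Fin 3) (Fin 3) ℂ where
  toFun c := !![c 3, c 0, c 1; -c 0, c 4, c 2; -c 1, -c 2, -(c 3 + c 4)]
  map_add' a b := by ext i j; fin_cases i <;> fin_cases j <;> simp <;> ring
  map_smul' r a := by ext i j; fin_cases i <;> fin_cases j <;> simp <;> ring

lemma symMap_inj : Function.Injective symMap := by
  intro a b hab
  funext i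
  have h01 := congrFun (congrFun hab 0) 1
  have h02 := congrFun (congrFun hab 0) 2
  have h12 := congrFun (congrFun hab 1) 2
  simp [symMap] at h01 h02 h12
  fin_cases i <;> assumption

lemma asymMap_inj : Function.Injective asymMap := by
  intro a b hab
  funext i
  have h01 := congrFun (congrFun hab 0) 1
  have h02 := congrFun (congrFun hab 0) 2
  have h12 := congrFun (congrFun hab 1) 2
  have h00 := congrFun (congrFun hab 0) 0
  have h11 := congrFun (congrFun hab 1) 1
  simp [asymMap] at h01 h02 h12 h00 h11
  fin_cases i <;> assumption

lemma eigenspace_half :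
    Module.End.eigenspace ascendE (1/2) = LinearMap.range symMap := by
  apply le_antisymm
  · intro x hx
    have e00 := eigen_entries hx 0 0
    have e11 := eigen_entries hx 1 1
    have e22 := eigen_entries hx 2 2
    have e01 := eigen_entries hx 0 1
    have e10 := eigen_entries hx 1 0
    have e02 := eigen_entries hx 0 2
    have e20 := eigen_entries hx 2 0
    have e12 := eigen_entries hx 1 2
    have e21 := eigen_entries hx 2 1
    simp only [if_pos rfl, if_neg (by decide : (0 : Fin 3) ≠ 1),
      if_neg (by decide : (1 : Fin 3) ≠ 0), if_neg (by decide : (0 : Fin 3) ≠ 2),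
      if_neg (by decide : (2 : Fin 3) ≠ 0), if_neg (by decide : (1 : Fin 3) ≠ 2),
      if_neg (by decide : (2 : Fin 3) ≠ 1), if_true, add_zero, mul_one] at e00 e11 e22 e01 e10 e02 e20 e12 e21
    refine ⟨![x 0 1, x 0 2, x 1 2], ?_⟩
    have ht : x 0 0 + x 1 1 + x 2 2 = 0 := by
      linear_combination (2 : ℂ) * (e00 + e11 + e22)
    have hd0 : x 0 0 = 0 := by linear_combination (1/2 : ℂ) * ht - e00
    have hd1 : x 1 1 = 0 := by linear_combination (1/2 : ℂ) * ht - e11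
    have hd2 : x 2 2 = 0 := by linear_combination (1/2 : ℂ) * ht - e22
    ext i j
    fin_cases i <;> fin_cases j <;>
      simp [symMap] <;>
      first
        | linear_combination -hd0 | linear_combination -hd1 | linear_combination -hd2
        | linear_combination (2:ℂ) * e10 | linear_combination (2:ℂ) * e20
        | linear_combination (2:ℂ) * e21
  · rintro _ ⟨c, rfl⟩
    rw [Module.End.mem_eigenspace_iff, ascendE_apply]
    ext i j
    fin_cases i <;> fin_cases j <;>
      simp [symMap, Matrix.trace_fin_three, Matrix.one_apply, Matrix.transpose_apply, Matrix.vecHead, Matrix.vecTail] <;> ring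

lemma eigenspace_neg_half :
    Module.End.eigenspace ascendE (-(1/2)) = LinearMap.range asymMap := by
  apply le_antisymm
  · intro x hx
    have e00 := eigen_entries hx 0 0
    have e11 := eigen_entries hx 1 1
    have e22 := eigen_entries hx 2 2
    have e01 := eigen_entries hx 0 1
    have e10 := eigen_entries hx 1 0
    have e02 := eigen_entries hx 0 2
    have e20 := eigen_entries hx 2 0
    have e12 := eigen_entries hx 1 2
    have e21 := eigen_entries hx 2 1
    simp only [if_pos rfl, if_neg (by decide : (0 : Fin 3) ≠ 1),
      if_neg (by decide : (1 : Fin 3) ≠ 0), if_neg (by decide : (0 : Fin 3) ≠ 2),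
      if_neg (by decide : (2 : Fin 3) ≠ 0), if_neg (by decide : (1 : Fin 3) ≠ 2),
      if_neg (by decide : (2 : Fin 3) ≠ 1), if_true, add_zero, mul_one] at e00 e11 e22 e01 e10 e02 e20 e12 e21
    refine ⟨![x 0 1, x 0 2, x 1 2, x 0 0, x 1 1], ?_⟩
    -- trace is zero
    have ht : x 0 0 + x 1 1 + x 2 2 = 0 := by linear_combination (2/3 : ℂ) * (e00 + e11 + e22)
    ext i j
    fin_cases i <;> fin_cases j <;>
      simp [asymMap] <;>
      first
        | rfl
        | linear_combination (2:ℂ) * e10 | linear_combination (2:ℂ) * e20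
        | linear_combination (2:ℂ) * e21
        | linear_combination (-2:ℂ) * e10 | linear_combination (-2:ℂ) * e20
        | linear_combination (-2:ℂ) * e21
        | linear_combination -ht | linear_combination ht
  · rintro _ ⟨c, rfl⟩
    rw [Module.End.mem_eigenspace_iff, ascendE_apply]
    ext i j
    fin_cases i <;> fin_cases j <;>
      simp [asymMap, Matrix.trace_fin_three, Matrix.one_apply, Matrix.transpose_apply, Matrix.vecHead, Matrix.vecTail] <;> ring

lemma ascendE_one : ascendE (1 : Matrix (Fin 3) (Fin 3) ℂ) = 1 := by
  rw [ascendE_apply]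
  ext i j
  fin_cases i <;> fin_cases j <;>
    simp [Matrix.trace_fin_three, Matrix.one_apply, Matrix.transpose_apply, Matrix.vecHead, Matrix.vecTail] <;> ring

/-- The ascending map `E` has exactly the eigenvalues `1`, `1/2`, `−1/2`; the
identity matrix is an eigenvector for `1`, the eigenspace of `1/2` is
`3`-dimensional, and the eigenspace of `−1/2` is `5`-dimensional. -/
theorem ascendE_eigenvalues :
    Module.End.HasEigenvalue ascendE 1 ∧
    Module.End.HasEigenvalue ascendE (1 / 2) ∧
    Module.End.HasEigenvalue ascendE (-(1 / 2)) ∧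
    (∀ μ : ℂ, Module.End.HasEigenvalue ascendE μ →
      μ ∈ ({1, 1 / 2, -(1 / 2)} : Set ℂ)) ∧
    ascendE (1 : Matrix (Fin 3) (Fin 3) ℂ) = 1 ∧
    Module.finrank ℂ (Module.End.eigenspace ascendE (1 / 2)) = 3 ∧
    Module.finrank ℂ (Module.End.eigenspace ascendE (-(1 / 2))) = 5 := by
  refine ⟨?_, ?_, ?_, ?_, ascendE_one, ?_, ?_⟩
  · exact Module.End.hasEigenvalue_of_hasEigenvector
      ⟨Module.End.mem_eigenspace_iff.2 (by rw [ascendE_one, one_smul]), one_ne_zero⟩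
  · apply Module.End.hasEigenvalue_of_hasEigenvector
      (x := !![0, 1, 0; 1, 0, 0; 0, 0, 0])
    constructor
    · rw [Module.End.mem_eigenspace_iff, ascendE_apply]
      ext i j
      fin_cases i <;> fin_cases j <;>
        simp [Matrix.trace_fin_three, Matrix.one_apply, Matrix.transpose_apply, Matrix.vecHead, Matrix.vecTail] <;> ring
    · intro h
      have := congrFun (congrFun h 0) 1
      simp at this
  · apply Module.End.hasEigenvalue_of_hasEigenvector
      (x := !![0, 1, 0; -1, 0, 0; 0, 0, 0])
    constructor
    · rw [Module.End.mem_eigenspace_iff, ascendE_apply]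
      ext i j
      fin_cases i <;> fin_cases j <;>
        simp [Matrix.trace_fin_three, Matrix.one_apply, Matrix.transpose_apply, Matrix.vecHead, Matrix.vecTail] <;> ring
    · intro h
      have := congrFun (congrFun h 0) 1
      simp at this
  · intro μ hμ
    by_contra hset
    simp only [Set.mem_insert_iff, Set.mem_singleton_iff, not_or] at hset
    obtain ⟨h1, h2, h3⟩ := hset
    obtain ⟨x, hx⟩ := hμ.exists_hasEigenvector
    apply hx.2
    have hmem := hx.1
    have e00 := eigen_entries hmem 0 0
    have e11 := eigen_entries hmem 1 1
    have e22 := eigen_entries hmem 2 2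
    have e01 := eigen_entries hmem 0 1
    have e10 := eigen_entries hmem 1 0
    have e02 := eigen_entries hmem 0 2
    have e20 := eigen_entries hmem 2 0
    have e12 := eigen_entries hmem 1 2
    have e21 := eigen_entries hmem 2 1
    simp only [if_pos rfl, if_neg (by decide : (0 : Fin 3) ≠ 1),
      if_neg (by decide : (1 : Fin 3) ≠ 0), if_neg (by decide : (0 : Fin 3) ≠ 2),
      if_neg (by decide : (2 : Fin 3) ≠ 0), if_neg (by decide : (1 : Fin 3) ≠ 2),
      if_neg (by decide : (2 : Fin 3) ≠ 1), if_true, add_zero, mul_one] at e00 e11 e22 e01 e10 e02 e20 e12 e21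
    have h1' : μ - 1 ≠ 0 := sub_ne_zero.2 h1
    have h2' : μ - 1/2 ≠ 0 := sub_ne_zero.2 h2
    have h3' : μ + 1/2 ≠ 0 := by
      intro h; apply h3; linear_combination h
    -- trace
    have ht : x 0 0 + x 1 1 + x 2 2 = 0 := by
      have : (μ - 1) * (x 0 0 + x 1 1 + x 2 2) = 0 := by
        linear_combination -(e00 + e11 + e22)
      exact (mul_eq_zero.1 this).resolve_left h1'
    have hoff : ∀ a b : Fin 3, (1/2:ℂ) * x b a = μ * x a b →
        (1/2:ℂ) * x a b = μ * x b a → x a b = 0 := by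
      intro a b hab hba
      have : (μ - 1/2) * ((μ + 1/2) * x a b) = 0 := by
        linear_combination -μ * hab - (1/2 : ℂ) * hba
      exact ((mul_eq_zero.1 ((mul_eq_zero.1 this).resolve_left h2')).resolve_left h3')
    have hdiag : ∀ a : Fin 3, (1/2:ℂ) * x a a + ((1/2:ℂ) * (x 0 0 + x 1 1 + x 2 2) - x a a)
        = μ * x a a → x a a = 0 := by
      intro a ha
      have : (μ + 1/2) * x a a = 0 := by
        rw [ht] at ha; linear_combination -ha
      exact (mul_eq_zero.1 this).resolve_left h3'
    ext i j
    fin_cases i <;> fin_cases j <;>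
      simp only [Matrix.zero_apply] <;>
      first
        | exact hdiag 0 e00 | exact hdiag 1 e11 | exact hdiag 2 e22
        | exact hoff 0 1 e01 e10 | exact hoff 1 0 e10 e01
        | exact hoff 0 2 e02 e20 | exact hoff 2 0 e20 e02
        | exact hoff 1 2 e12 e21 | exact hoff 2 1 e21 e12
  · rw [eigenspace_half, LinearMap.finrank_range_of_inj symMap_inj,
      Module.finrank_fin_fun]
  · rw [eigenspace_neg_half, LinearMap.finrank_range_of_inj asymMap_inj,
      Module.finrank_fin_fun]
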